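/- Let H be a real separable Hilbert space, S ⊆ H a nonempty closed set, x ∈ H with x ∉ S, and v ∈ H. Then the one-sided directional derivative lim_{h↓0} [d_S(x+hv) − d_S(x)]/h exists and equals min_{y* ∈ ∂d_S(x)} ⟨y*, v⟩, where ∂d_S(x) is the Clarke subdifferential of the distance function d_S at x. -/

import Mathlib

open Metric Set MeasureTheory Filter Pointwise

noncomputable section

variable {H : Type} [NormedAddCommGroup H] [InnerProductSpace ℝ H]

/-- The Clarke generalized directional derivative of `f` at `x` in direction `h`. -/
def clarkeDeriv (f : H → ℝ) (x h : H) : ℝ :=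
  Filter.limsup (fun p : H × ℝ => (f (p.1 + p.2 • h) - f p.1) / p.2)
    ((nhds x) ×ˢ (nhdsWithin 0 (Ioi (0:ℝ))))

/-- The Clarke subdifferential of `f` at `x`. -/
def clarkeSubdiff (f : H → ℝ) (x : H) : Set H :=
  {v : H | ∀ h : H, (inner ℝ v h : ℝ) ≤ clarkeDeriv f x h}

/-- The closure of a set with respect to the weak topology of `H`. -/
def weakClosure (A : Set H) : Set H :=
  (toWeakSpace ℝ H) ⁻¹' (closure ((toWeakSpace ℝ H) '' A))

/-- The Clarke normal cone to `S` at `x`: the weak closure of `ℝ₊ ∂d_S(x)`. -/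
def clarkeNormalCone (S : Set H) (x : H) : Set H :=
  weakClosure {w : H | ∃ l : ℝ, ∃ v ∈ clarkeSubdiff (fun u => infDist u S) x,
    0 ≤ l ∧ w = l • v}

/-- The (possibly empty) set of nearest points of `x` in `S`. -/
def projSet (S : Set H) (x : H) : Set H :=
  {y ∈ S | ‖x - y‖ = infDist x S}

/-- A family of closed sets is equi-uniformly subsmooth. -/
def EquiUniformlySubsmooth {ι : Sort*} (S : ι → Set H) : Prop :=
  ∀ ε > (0:ℝ), ∃ δ > (0:ℝ), ∀ j : ι, ∀ x₁ ∈ S j, ∀ x₂ ∈ S j, ‖x₁ - x₂‖ < δ →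
    ∀ v₁ ∈ clarkeNormalCone (S j) x₁ ∩ closedBall 0 1,
    ∀ v₂ ∈ clarkeNormalCone (S j) x₂ ∩ closedBall 0 1,
      -ε * ‖x₁ - x₂‖ ≤ (inner ℝ (v₁ - v₂) (x₁ - x₂) : ℝ)

/-- The Hausdorff measure of non-compactness of a set. -/
def hausMNC (A : Set H) : ℝ :=
  sInf {r : ℝ | 0 < r ∧ ∃ F : Finset H, A ⊆ ⋃ c ∈ F, closedBall c r}

/-- `v` is the derivative of the absolutely continuous function `x` on `[0,T]`. -/
def IsACDerivOn {E : Type} [NormedAddCommGroup E] [NormedSpace ℝ E] (T : ℝ)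
    (x v : ℝ → E) : Prop :=
  IntegrableOn v (Icc 0 T) volume ∧ ∀ t ∈ Icc 0 T, x t = x 0 + ∫ s in (0:ℝ)..t, v s

/-!
The Asplund function `φ = (‖·‖² - d_S²) / 2` is convex, being the supremum of the affine
functions `u ↦ ⟪u, y⟫ - ‖y‖² / 2` over `y ∈ S`. So `t ↦ φ (x + t • v)` has a right derivative
`D` at `0`, and writing `d_S² = ‖·‖² - 2φ` and dividing by `d_S(x + t • v) + d_S(x) → 2 d_S(x) > 0`
shows that the difference quotients of `d_S` converge to `L = (⟪x, v⟫ - D) / d_S(x)`. The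
three-slope inequality for `φ`, applied at points near `x`, gives `d_S°(x; -v) ≤ -L`, and the
ray `x + t • v` gives the reverse inequality. For any Lipschitz `f`, `f°(x; ·)` is sublinear
and bounded, so Hahn–Banach and the Riesz representation yield a `w ∈ ∂f(x)` with
`⟪w, -v⟫ = f°(x; -v)`; hence `min_{w ∈ ∂f(x)} ⟪w, v⟫ = -f°(x; -v) = L`.
-/

open Topology RealInnerProductSpace

theorem prod_nhdsWithin_le_nhds {α β : Type*} [TopologicalSpace α] [TopologicalSpace β] (x : α)
    (s : Set β) (b : β) : 𝓝 x ×ˢ 𝓝[s] b ≤ 𝓝 (x, b) := by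
  rw [nhds_prod_eq]
  exact prod_mono le_rfl nhdsWithin_le_nhds

theorem exists_linearMap_le_sublinear_eq {E : Type*} [AddCommGroup E] [Module ℝ E] (N : E → ℝ)
    (N_hom : ∀ c : ℝ, 0 < c → ∀ x, N (c • x) = c * N x) (N_add : ∀ x y, N (x + y) ≤ N x + N y)
    (h : E) : ∃ g : E →ₗ[ℝ] ℝ, (∀ x, g x ≤ N x) ∧ g h = N h := by
  have N_zero : N 0 = 0 := by
    have h2 := N_hom 2 two_pos 0
    rw [smul_zero] at h2
    linarith
  have N_smul_ge (c : ℝ) : c * N h ≤ N (c • h) := by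
    rcases lt_trichotomy c 0 with hc | rfl | hc
    · have hsub := N_add (c • h) ((-c) • h)
      rw [← add_smul, add_neg_cancel, zero_smul, N_zero, N_hom _ (neg_pos.2 hc)] at hsub
      linarith
    · simp [N_zero]
    · exact (N_hom c hc h).ge
  let g₀ : E →ₗ.[ℝ] ℝ := LinearPMap.mkSpanSingleton' h (N h) fun c hc => by
    rcases smul_eq_zero.1 hc with rfl | rfl <;> simp [N_zero]
  obtain ⟨g, hgg₀, hgN⟩ := exists_extension_of_le_sublinear g₀ N N_hom N_add <| by
    rintro ⟨_, hz⟩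
    obtain ⟨c, rfl⟩ := Submodule.mem_span_singleton.1 hz
    rw [LinearPMap.mkSpanSingleton'_apply]
    simpa using N_smul_ge c
  refine ⟨g, hgN, ?_⟩
  exact (hgg₀ ⟨h, Submodule.mem_span_singleton_self h⟩).trans
    (LinearPMap.mkSpanSingleton'_apply_self _ _ _ _)

section Clarke

def clarkeQuotient (f : H → ℝ) (h : H) (p : H × ℝ) : ℝ := (f (p.1 + p.2 • h) - f p.1) / p.2

theorem tendsto_prodMk_add_smul (x h : H) :
    Tendsto (fun p : H × ℝ => (p.1 + p.2 • h, p.2)) (𝓝 x ×ˢ 𝓝[>] 0) (𝓝 x ×ˢ 𝓝[>] 0) := by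
  have hc : Tendsto (fun p : H × ℝ => p.1 + p.2 • h) (𝓝 (x, 0)) (𝓝 (x + (0 : ℝ) • h)) :=
    (continuous_fst.add (continuous_snd.smul continuous_const)).tendsto _
  rw [zero_smul, add_zero] at hc
  exact (hc.mono_left (prod_nhdsWithin_le_nhds _ _ _)).prodMk tendsto_snd

variable {K : NNReal} {f : H → ℝ}

theorem LipschitzWith.abs_clarkeQuotient_le (hf : LipschitzWith K f) (x h : H) :
    ∀ᶠ p in 𝓝 x ×ˢ 𝓝[>] 0, |clarkeQuotient f h p| ≤ K * ‖h‖ := by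
  filter_upwards [eventually_mem_nhdsWithin.prod_inr (𝓝 x)] with p (hp : 0 < p.2)
  rw [clarkeQuotient, abs_div, abs_of_pos hp, div_le_iff₀ hp]
  calc |f (p.1 + p.2 • h) - f p.1| ≤ K * ‖(p.1 + p.2 • h) - p.1‖ := by
        simpa only [Real.dist_eq, dist_eq_norm, Real.norm_eq_abs] using hf.dist_le_mul _ _
    _ = K * ‖h‖ * p.2 := by
        rw [add_sub_cancel_left, norm_smul, Real.norm_of_nonneg hp.le]
        ring

theorem LipschitzWith.isBoundedUnder_clarkeQuotient (hf : LipschitzWith K f) (x h : H) :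
    IsBoundedUnder (· ≤ ·) (𝓝 x ×ˢ 𝓝[>] 0) (clarkeQuotient f h) :=
  isBoundedUnder_of_eventually_le <|
    (hf.abs_clarkeQuotient_le x h).mono fun _ hp => (abs_le.1 hp).2

theorem LipschitzWith.isCoboundedUnder_clarkeQuotient (hf : LipschitzWith K f) (x h : H) :
    IsCoboundedUnder (· ≤ ·) (𝓝 x ×ˢ 𝓝[>] 0) (clarkeQuotient f h) :=
  isCoboundedUnder_le_of_eventually_le _ <|
    (hf.abs_clarkeQuotient_le x h).mono fun _ hp => (abs_le.1 hp).1

theorem LipschitzWith.clarkeDeriv_le_of_eventually_le (hf : LipschitzWith K f) {x h : H} {c : ℝ}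
    (hc : ∀ᶠ p in 𝓝 x ×ˢ 𝓝[>] 0, clarkeQuotient f h p ≤ c) : clarkeDeriv f x h ≤ c :=
  limsup_le_of_le (hf.isCoboundedUnder_clarkeQuotient x h) hc

theorem LipschitzWith.eventually_clarkeQuotient_lt (hf : LipschitzWith K f) {x h : H} {c : ℝ}
    (hc : clarkeDeriv f x h < c) : ∀ᶠ p in 𝓝 x ×ˢ 𝓝[>] 0, clarkeQuotient f h p < c :=
  eventually_lt_of_limsup_lt hc (hf.isBoundedUnder_clarkeQuotient x h)

theorem LipschitzWith.clarkeDeriv_le (hf : LipschitzWith K f) (x h : H) :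
    clarkeDeriv f x h ≤ K * ‖h‖ :=
  hf.clarkeDeriv_le_of_eventually_le <|
    (hf.abs_clarkeQuotient_le x h).mono fun _ hp => (abs_le.1 hp).2

theorem LipschitzWith.clarkeDeriv_add_le (hf : LipschitzWith K f) (x h k : H) :
    clarkeDeriv f x (h + k) ≤ clarkeDeriv f x h + clarkeDeriv f x k := by
  refine le_add_of_forall_lt fun a ha b hb => hf.clarkeDeriv_le_of_eventually_le ?_
  filter_upwards [hf.eventually_clarkeQuotient_lt ha,
    (tendsto_prodMk_add_smul x h).eventually (hf.eventually_clarkeQuotient_lt hb)] with p hpa hpb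
  have hsplit : clarkeQuotient f (h + k) p
      = clarkeQuotient f h p + clarkeQuotient f k (p.1 + p.2 • h, p.2) := by
    simp only [clarkeQuotient, smul_add, add_assoc]
    ring
  linarith

theorem LipschitzWith.clarkeDeriv_smul_le (hf : LipschitzWith K f) (x h : H) {c : ℝ}
    (hc : 0 < c) : clarkeDeriv f x (c • h) ≤ c * clarkeDeriv f x h := by
  rw [← inv_mul_le_iff₀ hc]
  refine le_of_forall_gt_imp_ge_of_dense fun a ha => ?_
  rw [inv_mul_le_iff₀ hc]
  refine hf.clarkeDeriv_le_of_eventually_le ?_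
  have hscale : Tendsto (fun p : H × ℝ => (p.1, c * p.2)) (𝓝 x ×ˢ 𝓝[>] 0) (𝓝 x ×ˢ 𝓝[>] 0) :=
    tendsto_fst.prodMk ((tendsto_iff_comap.2 (comap_mulLeft_nhdsGT_zero hc).ge).comp tendsto_snd)
  filter_upwards [hscale.eventually (hf.eventually_clarkeQuotient_lt ha)] with p hp
  have hrescale : clarkeQuotient f (c • h) p = c * clarkeQuotient f h (p.1, c * p.2) := by
    simp only [clarkeQuotient, smul_smul, mul_comm p.2 c]
    rw [mul_div_assoc', mul_div_mul_left _ _ hc.ne']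
  rw [hrescale]
  exact mul_le_mul_of_nonneg_left hp.le hc.le

theorem LipschitzWith.clarkeDeriv_smul (hf : LipschitzWith K f) (x h : H) {c : ℝ} (hc : 0 < c) :
    clarkeDeriv f x (c • h) = c * clarkeDeriv f x h := by
  refine le_antisymm (hf.clarkeDeriv_smul_le x h hc) ?_
  have h' := hf.clarkeDeriv_smul_le x (c • h) (inv_pos.2 hc)
  rwa [smul_smul, inv_mul_cancel₀ hc.ne', one_smul, le_inv_mul_iff₀ hc] at h'

theorem LipschitzWith.neg_le_clarkeDeriv_neg (hf : LipschitzWith K f) {x v : H} {L : ℝ}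
    (hL : Tendsto (fun t : ℝ => (f (x + t • v) - f x) / t) (𝓝[>] 0) (𝓝 L)) :
    -L ≤ clarkeDeriv f x (-v) := by
  refine le_of_forall_gt_imp_ge_of_dense fun c hc => le_of_tendsto hL.neg ?_
  have hray : Tendsto (fun t : ℝ => (x + t • v, t)) (𝓝[>] 0) (𝓝 x ×ˢ 𝓝[>] 0) :=
    (tendsto_prodMk_add_smul x v).comp (tendsto_const_nhds.prodMk tendsto_id)
  filter_upwards [hray.eventually (hf.eventually_clarkeQuotient_lt hc)] with t ht
  simp only [clarkeQuotient, smul_neg, add_neg_cancel_right] at ht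
  rw [← neg_div, neg_sub]
  exact ht.le

theorem LipschitzWith.exists_mem_clarkeSubdiff_inner_eq [CompleteSpace H]
    (hf : LipschitzWith K f) (x h : H) : ∃ w ∈ clarkeSubdiff f x, ⟪w, h⟫ = clarkeDeriv f x h := by
  obtain ⟨g, hgN, hgh⟩ := exists_linearMap_le_sublinear_eq (clarkeDeriv f x)
    (fun _ hc u => hf.clarkeDeriv_smul x u hc) (hf.clarkeDeriv_add_le x) h
  have hg_bound (u : H) : ‖g u‖ ≤ K * ‖u‖ := by
    have hneg := (hgN (-u)).trans (hf.clarkeDeriv_le x (-u))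
    rw [map_neg, norm_neg] at hneg
    exact abs_le.2 ⟨by linarith, (hgN u).trans (hf.clarkeDeriv_le x u)⟩
  refine ⟨(InnerProductSpace.toDual ℝ H).symm (g.mkContinuous K hg_bound), fun u => ?_, ?_⟩ <;>
    rw [InnerProductSpace.toDual_symm_apply, LinearMap.mkContinuous_apply]
  · exact hgN u
  · exact hgh

theorem LipschitzWith.sInf_inner_clarkeSubdiff [CompleteSpace H] (hf : LipschitzWith K f)
    (x v : H) : sInf ((fun w : H => ⟪w, v⟫) '' clarkeSubdiff f x) = -clarkeDeriv f x (-v) := by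
  refine IsLeast.csInf_eq ⟨?_, ?_⟩
  · obtain ⟨w, hw, hwv⟩ := hf.exists_mem_clarkeSubdiff_inner_eq x (-v)
    exact ⟨w, hw, by rw [← hwv, inner_neg_right, neg_neg]⟩
  · rintro _ ⟨w, hw, rfl⟩
    have hwv := hw (-v)
    rw [inner_neg_right] at hwv
    linarith

end Clarke

section Asplund

def asplund {E : Type*} [NormedAddCommGroup E] (S : Set E) (u : E) : ℝ :=
  (‖u‖ ^ 2 - infDist u S ^ 2) / 2

theorem continuous_asplund {E : Type*} [NormedAddCommGroup E] (S : Set E) :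
    Continuous (asplund S) :=
  ((continuous_norm.pow 2).sub ((continuous_infDist_pt S).pow 2)).div_const 2

variable {S : Set H}

theorem inner_sub_le_asplund {y : H} (hy : y ∈ S) (u : H) :
    ⟪u, y⟫ - ‖y‖ ^ 2 / 2 ≤ asplund S u := by
  have hle : infDist u S ≤ ‖u - y‖ := dist_eq_norm u y ▸ infDist_le_dist_of_mem hy
  have hsq : infDist u S ^ 2 ≤ ‖u - y‖ ^ 2 := pow_le_pow_left₀ infDist_nonneg hle 2
  rw [norm_sub_sq_real] at hsq
  unfold asplund
  linarith

theorem exists_asplund_le_inner_sub (hne : S.Nonempty) (u : H) {ε : ℝ} (hε : 0 < ε) :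
    ∃ y ∈ S, asplund S u ≤ ⟪u, y⟫ - ‖y‖ ^ 2 / 2 + ε := by
  have hlt : infDist u S < √(infDist u S ^ 2 + 2 * ε) :=
    (Real.lt_sqrt infDist_nonneg).2 (by linarith)
  obtain ⟨y, hy, hdist⟩ := (infDist_lt_iff hne).1 hlt
  have hsq : ‖u - y‖ ^ 2 < infDist u S ^ 2 + 2 * ε := by
    rw [← dist_eq_norm]
    exact (Real.lt_sqrt dist_nonneg).1 hdist
  rw [norm_sub_sq_real] at hsq
  refine ⟨y, hy, ?_⟩
  unfold asplund
  linarith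

theorem convexOn_asplund (hne : S.Nonempty) : ConvexOn ℝ univ (asplund S) := by
  refine ⟨convex_univ, fun u _ z _ a b ha hb hab => le_of_forall_pos_le_add fun ε hε => ?_⟩
  obtain ⟨y, hy, hle⟩ := exists_asplund_le_inner_sub hne (a • u + b • z) hε
  have hu := mul_le_mul_of_nonneg_left (inner_sub_le_asplund hy u) ha
  have hz := mul_le_mul_of_nonneg_left (inner_sub_le_asplund hy z) hb
  rw [inner_add_left, real_inner_smul_left, real_inner_smul_left] at hle
  simp only [smul_eq_mul]
  linear_combination hle + hu + hz + (‖y‖ ^ 2 / 2) * hab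

theorem convexOn_asplund_comp_line (hne : S.Nonempty) (y v : H) :
    ConvexOn ℝ univ (fun t : ℝ => asplund S (y + t • v)) := by
  simpa [Function.comp_def, AffineMap.lineMap_apply_module', add_comm] using
    (convexOn_asplund hne).comp_affineMap (AffineMap.lineMap y (y + v))

theorem exists_tendsto_asplund_slope (hne : S.Nonempty) (x v : H) :
    ∃ D, Tendsto (fun t : ℝ => (asplund S (x + t • v) - asplund S x) / t) (𝓝[>] 0) (𝓝 D) := by
  have hderiv := (convexOn_asplund_comp_line hne x v).hasDerivWithinAt_rightDeriv_of_mem_interior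
    (by simp : (0 : ℝ) ∈ interior univ)
  rw [hasDerivWithinAt_iff_tendsto_slope, sdiff_singleton_eq_self self_notMem_Ioi] at hderiv
  refine ⟨_, hderiv.congr fun t => ?_⟩
  simp [slope_def_field]

theorem asplund_slope_le_slope (hne : S.Nonempty) (y v : H) {t t₀ : ℝ} (ht : 0 < t)
    (ht₀ : 0 < t₀) :
    (asplund S y - asplund S (y - t • v)) / t ≤ (asplund S (y + t₀ • v) - asplund S y) / t₀ := by
  have hmono := (convexOn_asplund_comp_line hne y v).slope_mono_adjacent (mem_univ (-t))
    (mem_univ t₀) (neg_neg_of_pos ht) ht₀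
  simpa [← sub_eq_add_neg] using hmono

theorem infDist_slope_eq_asplund_slope (S : Set H) (y h : H) {t : ℝ} (ht : t ≠ 0)
    (hpos : infDist (y + t • h) S + infDist y S ≠ 0) :
    (infDist (y + t • h) S - infDist y S) / t
      = (2 * ⟪y, h⟫ + t * ‖h‖ ^ 2 - 2 * ((asplund S (y + t • h) - asplund S y) / t))
        / (infDist (y + t • h) S + infDist y S) := by
  have hnorm : ‖y + t • h‖ ^ 2 = ‖y‖ ^ 2 + 2 * t * ⟪y, h⟫ + t ^ 2 * ‖h‖ ^ 2 := by
    rw [norm_add_sq_real, real_inner_smul_right, norm_smul, Real.norm_eq_abs, mul_pow, sq_abs]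
    ring
  rw [div_eq_div_iff ht hpos]
  unfold asplund
  field_simp
  rw [hnorm]
  ring

end Asplund

section Distance

variable {S : Set H} {x v : H} {D : ℝ}

theorem tendsto_infDist_slope (hd : 0 < infDist x S)
    (hD : Tendsto (fun t : ℝ => (asplund S (x + t • v) - asplund S x) / t) (𝓝[>] 0) (𝓝 D)) :
    Tendsto (fun t : ℝ => (infDist (x + t • v) S - infDist x S) / t) (𝓝[>] 0)
      (𝓝 ((⟪x, v⟫ - D) / infDist x S)) := by
  have hnum : Tendsto
      (fun t : ℝ => 2 * ⟪x, v⟫ + t * ‖v‖ ^ 2 - 2 * ((asplund S (x + t • v) - asplund S x) / t))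
      (𝓝[>] 0) (𝓝 (2 * ⟪x, v⟫ + 0 * ‖v‖ ^ 2 - 2 * D)) :=
    ((tendsto_nhdsWithin_of_tendsto_nhds tendsto_id).mul_const _ |>.const_add _).sub
      (hD.const_mul 2)
  have hden : Tendsto (fun t : ℝ => infDist (x + t • v) S + infDist x S) (𝓝[>] 0)
      (𝓝 (infDist (x + (0 : ℝ) • v) S + infDist x S)) :=
    (((continuous_infDist_pt S).comp (continuous_const.add
      (continuous_id.smul continuous_const))).add continuous_const).continuousWithinAt.tendsto
  rw [zero_smul, add_zero] at hden
  convert (hnum.div hden (by linarith)).congr' ?_ using 2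
  · field_simp
    ring
  filter_upwards [eventually_mem_nhdsWithin] with t (ht : 0 < t)
  exact (infDist_slope_eq_asplund_slope S x v ht.ne'
    (add_pos_of_nonneg_of_pos infDist_nonneg hd).ne').symm

theorem clarkeDeriv_infDist_neg_le_of_pos (hne : S.Nonempty) (hd : 0 < infDist x S) {t₀ : ℝ}
    (ht₀ : 0 < t₀) :
    clarkeDeriv (fun u => infDist u S) x (-v)
      ≤ ((asplund S (x + t₀ • v) - asplund S x) / t₀ - ⟪x, v⟫) / infDist x S := by
  set den : H × ℝ → ℝ := fun p => infDist (p.1 + p.2 • -v) S + infDist p.1 S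
  -- the quotient for `-v` at `p`, with the backward slope of `φ` replaced by a forward one
  set R : H × ℝ → ℝ := fun p =>
    (-2 * ⟪p.1, v⟫ + p.2 * ‖v‖ ^ 2 + 2 * ((asplund S (p.1 + t₀ • v) - asplund S p.1) / t₀))
      / den p
  have hden : Continuous den :=
    ((continuous_infDist_pt S).comp (continuous_fst.add
      (continuous_snd.smul continuous_const))).add ((continuous_infDist_pt S).comp continuous_fst)
  have hden₀ : den (x, 0) = 2 * infDist x S := by
    simp only [den, zero_smul, add_zero]
    ring
  have hR : Tendsto R (𝓝 x ×ˢ 𝓝[>] 0) (𝓝 (R (x, 0))) := by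
    refine (ContinuousAt.tendsto ?_).mono_left (prod_nhdsWithin_le_nhds _ _ _)
    refine ContinuousAt.div (Continuous.continuousAt ?_) hden.continuousAt
      (by rw [hden₀]; positivity)
    have hasp := continuous_asplund S
    fun_prop
  have hle : clarkeQuotient (fun u => infDist u S) (-v) ≤ᶠ[𝓝 x ×ˢ 𝓝[>] 0] R := by
    have hden_pos : ∀ᶠ p in 𝓝 x ×ˢ 𝓝[>] 0, 0 < den p :=
      ((hden.tendsto (x, 0)).mono_left (prod_nhdsWithin_le_nhds _ _ _)).eventually_const_lt
        (by rw [hden₀]; positivity)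
    filter_upwards [eventually_mem_nhdsWithin.prod_inr (𝓝 x), hden_pos] with p (hp : 0 < p.2) hdp
    rw [clarkeQuotient, infDist_slope_eq_asplund_slope S p.1 (-v) hp.ne' hdp.ne']
    refine div_le_div_of_nonneg_right ?_ hdp.le
    have hslope := asplund_slope_le_slope hne p.1 v hp ht₀
    rw [smul_neg, ← sub_eq_add_neg, inner_neg_right, norm_neg]
    have hflip : (asplund S (p.1 - p.2 • v) - asplund S p.1) / p.2
        = -((asplund S p.1 - asplund S (p.1 - p.2 • v)) / p.2) := by ring
    linarith
  calc clarkeDeriv (fun u => infDist u S) x (-v)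
      ≤ limsup R (𝓝 x ×ˢ 𝓝[>] 0) :=
        limsup_le_limsup hle ((lipschitz_infDist_pt S).isCoboundedUnder_clarkeQuotient x (-v))
          hR.isBoundedUnder_le
    _ = R (x, 0) := hR.limsup_eq
    _ = _ := by
      simp only [R, hden₀, zero_mul, add_zero]
      field_simp
      ring

theorem clarkeDeriv_infDist_neg_le (hne : S.Nonempty) (hd : 0 < infDist x S)
    (hD : Tendsto (fun t : ℝ => (asplund S (x + t • v) - asplund S x) / t) (𝓝[>] 0) (𝓝 D)) :
    clarkeDeriv (fun u => infDist u S) x (-v) ≤ (D - ⟪x, v⟫) / infDist x S :=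
  ge_of_tendsto ((hD.sub_const _).div_const _) <|
    eventually_mem_nhdsWithin.mono fun _ ht₀ => clarkeDeriv_infDist_neg_le_of_pos hne hd ht₀

end Distance

theorem dir_deriv_dist_eq_min_inner_general
    {H : Type} [NormedAddCommGroup H] [InnerProductSpace ℝ H] [CompleteSpace H]
    (S : Set H) (hne : S.Nonempty) (hcl : IsClosed S)
    (x : H) (hx : x ∉ S) (v : H) :
    Filter.Tendsto
        (fun h : ℝ => (infDist (x + h • v) S - infDist x S) / h)
        (nhdsWithin 0 (Ioi (0:ℝ)))
        (nhds (sInf ((fun w : H => (inner ℝ w v : ℝ)) ''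
          clarkeSubdiff (fun u => infDist u S) x))) := by
  have hd : 0 < infDist x S := (hcl.notMem_iff_infDist_pos hne).1 hx
  obtain ⟨D, hD⟩ := exists_tendsto_asplund_slope hne x v
  have hslope := tendsto_infDist_slope hd hD
  have hclarke :
      clarkeDeriv (fun u => infDist u S) x (-v) = -((⟪x, v⟫ - D) / infDist x S) := by
    refine le_antisymm ?_ ((lipschitz_infDist_pt S).neg_le_clarkeDeriv_neg hslope)
    rw [← neg_div, neg_sub]
    exact clarkeDeriv_infDist_neg_le hne hd hD
  rwa [(lipschitz_infDist_pt S).sInf_inner_clarkeSubdiff, hclarke, neg_neg]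

/-- Lemma 4.1: outside `S`, the one-sided directional derivative of the distance
function exists and equals the minimum of `⟨y*, v⟩` over `∂d_S(x)`. -/
theorem dir_deriv_dist_eq_min_inner
    {H : Type} [NormedAddCommGroup H] [InnerProductSpace ℝ H] [CompleteSpace H]
    [TopologicalSpace.SeparableSpace H]
    (S : Set H) (hne : S.Nonempty) (hcl : IsClosed S)
    (x : H) (hx : x ∉ S) (v : H) :
    Filter.Tendsto
        (fun h : ℝ => (infDist (x + h • v) S - infDist x S) / h)
        (nhdsWithin 0 (Ioi (0:ℝ)))
        (nhds (sInf ((fun w : H => (inner ℝ w v : ℝ)) ''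
          clarkeSubdiff (fun u => infDist u S) x))) :=
  dir_deriv_dist_eq_min_inner_general S hne hcl x hx v
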